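/- arXiv:1509.05892 — 2 statements merged into one kernel-verified Lean document; each statement's English description precedes it below -/
import Mathlib

section
/- Let q ∈ ℂ with 0 < |q| < 1, let a_1, a_2, b_1, b_2 ∈ ℂ with b_1, b_2, a_2 ≠ 0, and let k ∈ ℕ. Assume (b_2 q^{−k+1}/a_2; q)_s ≠ 0 for all 0 ≤ s ≤ k. Then the coefficient p_k in the power series expansion (a_1 x, a_2 x; q)_∞/(b_1 x, b_2 x; q)_∞ = ∑_{k≥0} p_k x^k (valid for |x| < min(1/|b_1|, 1/|b_2|)) is given by the terminating q-hypergeometric expression p_k = b_2^k (a_2/b_2; q)_k / (q; q)_k · ∑_{s=0}^{k} [ (q^{−k}; q)_s (a_1/b_1; q)_s / ( (b_2 q^{−k+1}/a_2; q)_s (q; q)_s ) ] (q b_1/a_2)^s. -/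
/-!
Write `F(x)` for the quotient of infinite products. Replacing `x` by `q x` removes the first
factor of each product, so `(1 - b₁x)(1 - b₂x) F(x) = (1 - a₁x)(1 - a₂x) F(qx)`. Since `qⁿ ≠ 1`
for `n ≠ 0`, this `q`-difference equation determines a power series from its constant term. The
product of the two `q`-binomial series `∑ bⁿ (a/b;q)ₙ/(q;q)ₙ xⁿ` solves the same equation with the
same constant term `1`, so `p_k` is their Cauchy product. Reversing the order of the factors of
`(c;q)_k` expresses `(q^{1-k}/c;q)_s` through `(c;q)_k / (c;q)_{k-s}`; with `c = q` and
`c = a₂/b₂` this turns the `s`-th term of the Cauchy product into the `s`-th term of the `₂φ₁`.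
-/

open Filter Finset PowerSeries

noncomputable def qPochhammer (q c : ℂ) (n : ℕ) : ℂ := ∏ i ∈ range n, (1 - c * q ^ i)

-- the coefficient of `xⁿ` in `(a x; q)_∞ / (b x; q)_∞`, by the `q`-binomial theorem
noncomputable def qBinomialCoeff (q a b : ℂ) (n : ℕ) : ℂ :=
  b ^ n * qPochhammer q (a / b) n / qPochhammer q q n

section QPochhammer

variable {q : ℂ}

theorem qPochhammer_zero (c : ℂ) : qPochhammer q c 0 = 1 := prod_range_zero _

theorem qPochhammer_succ (c : ℂ) (n : ℕ) :
    qPochhammer q c (n + 1) = qPochhammer q c n * (1 - c * q ^ n) :=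
  prod_range_succ _ _

theorem pow_ne_one_of_norm_lt_one (hq : ‖q‖ < 1) {n : ℕ} (hn : n ≠ 0) : q ^ n ≠ 1 := fun h =>
  (pow_lt_one₀ (norm_nonneg q) hq hn).ne (by simpa using congrArg norm h)

theorem qPochhammer_self_ne_zero (hq : ‖q‖ < 1) (n : ℕ) : qPochhammer q q n ≠ 0 :=
  prod_ne_zero_iff.mpr fun i _ => by
    rw [← pow_succ']
    exact sub_ne_zero.mpr (pow_ne_one_of_norm_lt_one hq i.succ_ne_zero).symm

-- `(c;q)_{s+t}` read backwards: `(1 - x qⁱ) c q^{s+t} = -q^{i+1} (1 - c q^{s+t-1-i})`.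
theorem qPochhammer_reverse {x c : ℂ} (s : ℕ) :
    ∀ t, x * c * q ^ (s + t) = q →
      qPochhammer q x s * (c * q ^ (s + t)) ^ s * qPochhammer q c t =
        (-1) ^ s * q ^ (∑ i ∈ range s, (i + 1)) * qPochhammer q c (s + t) := by
  induction s with
  | zero => simp [qPochhammer_zero]
  | succ s ih =>
    intro t h
    have ih := ih (t + 1) (by rwa [← add_assoc, add_right_comm])
    have key : (1 - x * q ^ s) * (c * q ^ (s + 1 + t)) = -q ^ (s + 1) * (1 - c * q ^ t) := by
      linear_combination (-q ^ s) * h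
    rw [qPochhammer_succ, ← add_assoc, add_right_comm s t 1] at ih
    rw [qPochhammer_succ, sum_range_succ]
    linear_combination (qPochhammer q x s * (c * q ^ (s + 1 + t)) ^ s * qPochhammer q c t) * key
      - q ^ (s + 1) * ih

theorem qBinomialCoeff_succ (hq : ‖q‖ < 1) {a b : ℂ} (hb : b ≠ 0) (n : ℕ) :
    (1 - q ^ (n + 1)) * qBinomialCoeff q a b (n + 1) =
      (b - a * q ^ n) * qBinomialCoeff q a b n := by
  have hn := qPochhammer_self_ne_zero hq n
  have hn1 : 1 - q * q ^ n ≠ 0 := by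
    rw [← pow_succ']; exact sub_ne_zero.mpr (pow_ne_one_of_norm_lt_one hq n.succ_ne_zero).symm
  simp only [qBinomialCoeff, qPochhammer_succ, pow_succ']
  field_simp

theorem two_phi_one_term_eq_qBinomialCoeff_mul (hq : q ≠ 0) (hq1 : ‖q‖ < 1) {a1 a2 b1 b2 : ℂ}
    (ha2 : a2 ≠ 0) (hb2 : b2 ≠ 0) {k s : ℕ} (hsk : s ≤ k)
    (hR : qPochhammer q (b2 * q ^ (1 - (k : ℤ)) / a2) s ≠ 0) :
    b2 ^ k * qPochhammer q (a2 / b2) k / qPochhammer q q k *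
      (qPochhammer q (q ^ (-(k : ℤ))) s * qPochhammer q (a1 / b1) s /
        (qPochhammer q (b2 * q ^ (1 - (k : ℤ)) / a2) s * qPochhammer q q s) * (q * b1 / a2) ^ s) =
      qBinomialCoeff q a1 b1 s * qBinomialCoeff q a2 b2 (k - s) := by
  obtain ⟨t, rfl⟩ := Nat.exists_eq_add_of_le hsk
  rw [Nat.add_sub_cancel_left]
  have hpow : q ^ (s + t) ≠ 0 := pow_ne_zero _ hq
  have hzpow : q ^ (1 - ((s + t : ℕ) : ℤ)) = q / q ^ (s + t) := by
    rw [zpow_sub₀ hq, zpow_one, zpow_natCast]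
  have hself := qPochhammer_reverse (x := q ^ (-((s + t : ℕ) : ℤ))) (c := q) s t
    (by rw [zpow_neg, zpow_natCast]; field_simp)
  have hratio := qPochhammer_reverse
    (x := b2 * q ^ (1 - ((s + t : ℕ) : ℤ)) / a2) (c := a2 / b2) s t
    (by rw [hzpow]; field_simp)
  have hσ : (-1) ^ s * q ^ (∑ i ∈ range s, (i + 1)) ≠ 0 := by simp [hq]
  have hs := qPochhammer_self_ne_zero hq1 s
  have ht := qPochhammer_self_ne_zero hq1 t
  have hst := qPochhammer_self_ne_zero hq1 (s + t)
  rw [mul_pow, div_pow] at hratio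
  field_simp at hratio
  simp only [qBinomialCoeff]
  rw [div_pow]
  field_simp
  refine mul_left_cancel₀ (mul_ne_zero hσ (pow_ne_zero s hpow)) ?_
  linear_combination
    (-(b2 ^ t * qPochhammer q (q ^ (-((s + t : ℕ) : ℤ))) s * qPochhammer q (a1 / b1) s *
        (b1 * q) ^ s * qPochhammer q q t * (q ^ (s + t)) ^ s)) * hratio +
      (b2 ^ t * qPochhammer q (a1 / b1) s * b1 ^ s *
        qPochhammer q (b2 * q ^ (1 - ((s + t : ℕ) : ℤ)) / a2) s * a2 ^ s * (q ^ (s + t)) ^ s *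
        qPochhammer q (a2 / b2) t) * hself

end QPochhammer

namespace PowerSeries

variable {R : Type*} [CommRing R]

theorem constantCoeff_rescale (q : R) (f : R⟦X⟧) :
    constantCoeff (rescale q f) = constantCoeff f := by
  rw [← coeff_zero_eq_constantCoeff_apply, coeff_rescale, pow_zero, one_mul,
    coeff_zero_eq_constantCoeff_apply]

theorem eq_zero_of_mul_eq_mul_rescale [IsDomain R] {q : R} (hq : ∀ n ≠ 0, q ^ n ≠ 1)
    {u v E : R⟦X⟧} (huv : constantCoeff u = constantCoeff v) (hu : constantCoeff u ≠ 0)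
    (hE : u * E = v * rescale q E) (hE0 : constantCoeff E = 0) : E = 0 := by
  have hdvd : ∀ n, X ^ (n + 1) ∣ E := by
    intro n
    induction n with
    | zero => simpa [X_dvd_iff] using hE0
    | succ n ih =>
      obtain ⟨G, rfl⟩ := ih
      have hG : u * G = v * (C (q ^ (n + 1)) * rescale q G) := by
        refine mul_left_cancel₀ (pow_ne_zero (n + 1) (X_ne_zero (R := R))) ?_
        rw [map_mul, map_pow, rescale_X, mul_pow, ← map_pow] at hE
        linear_combination hE
      have hG0 : constantCoeff G = 0 := by
        have := congrArg constantCoeff hG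
        simp only [map_mul, constantCoeff_C, constantCoeff_rescale, huv] at this
        have hv : constantCoeff v ≠ 0 := huv ▸ hu
        have hq1 : (1 : R) - q ^ (n + 1) ≠ 0 := sub_ne_zero.mpr (hq _ n.succ_ne_zero).symm
        have : constantCoeff v * (1 - q ^ (n + 1)) * constantCoeff G = 0 := by
          linear_combination this
        simpa [hv, hq1] using this
      obtain ⟨H, rfl⟩ := X_dvd_iff.mpr hG0
      exact ⟨H, by ring⟩
  ext n
  simpa using X_pow_dvd_iff.mp (hdvd n) n n.lt_succ_self

end PowerSeries

def HasSumOnBall (P : ℂ⟦X⟧) (f : ℂ → ℂ) (r : ℝ) : Prop :=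
  ∀ x : ℂ, ‖x‖ < r → HasSum (fun n => coeff n P * x ^ n) (f x)

namespace HasSumOnBall

variable {P Q : ℂ⟦X⟧} {f g : ℂ → ℂ} {r : ℝ}

theorem sub (hP : HasSumOnBall P f r) (hQ : HasSumOnBall Q g r) :
    HasSumOnBall (P - Q) (fun x => f x - g x) r := fun x hx => by
  simpa only [map_sub, sub_mul] using (hP x hx).sub (hQ x hx)

theorem one_sub_C_mul_X_mul (h : HasSumOnBall P f r) (b : ℂ) :
    HasSumOnBall ((1 - C b * X) * P) (fun x => (1 - b * x) * f x) r := fun x hx => by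
  have hX : HasSum (fun n => coeff n (X * P) * x ^ n) (x * f x) := by
    rw [← hasSum_nat_add_iff' 1]
    simpa [coeff_succ_X_mul, pow_succ, mul_assoc, mul_comm x] using (h x hx).mul_right x
  simpa only [sub_mul, one_mul, mul_assoc, map_sub, coeff_C_mul] using
    (h x hx).sub (hX.mul_left b)

theorem rescale (h : HasSumOnBall P f r) {q : ℂ} (hq : ‖q‖ ≤ 1) :
    HasSumOnBall (rescale q P) (fun x => f (q * x)) r := fun x hx => by
  have hqx : ‖q * x‖ < r := by
    rw [norm_mul]
    exact lt_of_le_of_lt (mul_le_of_le_one_left (norm_nonneg x) hq) hx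
  simpa only [coeff_rescale, mul_pow, mul_assoc, mul_left_comm] using h (q * x) hqx

theorem constantCoeff_eq (h : HasSumOnBall P f r) (hr : 0 < r) : constantCoeff P = f 0 := by
  refine (HasSum.unique ?_ (h 0 (by simpa using hr)))
  simpa using hasSum_single (f := fun n => coeff n P * (0 : ℂ) ^ n) 0 (fun n hn => by simp [hn])

theorem eq_zero (h : HasSumOnBall P f r) (hr : 0 < r) (hf : ∀ x : ℂ, ‖x‖ < r → f x = 0) :
    P = 0 := by
  set p := FormalMultilinearSeries.ofScalars ℂ (fun n => coeff n P)
  set t : NNReal := ⟨r / 2, by positivity⟩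
  have ht : (t : ℝ) < r := by change r / 2 < r; linarith
  have ht0 : 0 < t := by rw [← NNReal.coe_pos]; change 0 < r / 2; positivity
  have hball : HasFPowerSeriesOnBall (fun _ => (0 : ℂ)) p 0 t := by
    refine ⟨?_, ENNReal.coe_pos.mpr ht0, fun {y} hy => ?_⟩
    · refine p.le_radius_of_tendsto (l := 0) ?_
      have := (h t (by simpa using ht)).summable.tendsto_atTop_zero.norm
      simpa [p, FormalMultilinearSeries.ofScalars_norm] using this
    · have hy : ‖y‖ < r := lt_trans (by simpa using hy) ht
      simpa [p, FormalMultilinearSeries.ofScalars_apply_eq, hf y hy, mul_comm] using h y hy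
  have hp := hball.hasFPowerSeriesAt.eq_zero_of_eventually (Eventually.of_forall fun _ => rfl)
  ext n
  simpa [p] using congrArg (fun p => p n) hp

end HasSumOnBall

noncomputable def qRatio (q a1 a2 b1 b2 x : ℂ) : ℂ :=
  ((∏' n : ℕ, (1 - a1 * q ^ n * x)) * (∏' n : ℕ, (1 - a2 * q ^ n * x))) /
    ((∏' n : ℕ, (1 - b1 * q ^ n * x)) * (∏' n : ℕ, (1 - b2 * q ^ n * x)))

section QDifference

variable {q : ℂ}

theorem tprod_one_sub_mul_pow_mul (hq : ‖q‖ < 1) (c x : ℂ) :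
    ∏' n : ℕ, (1 - c * q ^ n * x) = (1 - c * x) * ∏' n : ℕ, (1 - c * q ^ n * (q * x)) := by
  have hmul : Multipliable fun n : ℕ => 1 + -(c * q * x) * q ^ n :=
    Complex.multipliable_one_add_of_summable ((summable_geometric_of_norm_lt_one hq).mul_left _)
  rw [tprod_eq_zero_mul' (hmul.congr fun n => by ring)]
  simp only [pow_zero, mul_one, pow_succ]
  congr 1
  exact tprod_congr fun n => by ring

theorem qRatio_zero (a1 a2 b1 b2 : ℂ) : qRatio q a1 a2 b1 b2 0 = 1 := by
  simp [qRatio]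

theorem one_sub_mul_ne_zero_of_norm_lt {b x : ℂ} (hx : ‖x‖ < 1 / ‖b‖) : 1 - b * x ≠ 0 := by
  intro h
  have hbx : ‖b‖ * ‖x‖ = 1 := by rw [← norm_mul, ← sub_eq_zero.mp h, norm_one]
  have hb : 0 < ‖b‖ := (norm_nonneg b).lt_of_ne fun h0 => by simp [← h0] at hbx
  linarith [(lt_div_iff₀' hb).mp hx]

theorem mul_qRatio_eq (hq : ‖q‖ < 1) {a1 a2 b1 b2 x : ℂ} (h1 : 1 - b1 * x ≠ 0)
    (h2 : 1 - b2 * x ≠ 0) :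
    (1 - b1 * x) * ((1 - b2 * x) * qRatio q a1 a2 b1 b2 x) =
      (1 - a1 * x) * ((1 - a2 * x) * qRatio q a1 a2 b1 b2 (q * x)) := by
  have hsplit : qRatio q a1 a2 b1 b2 x =
      (1 - a1 * x) * (1 - a2 * x) / ((1 - b1 * x) * (1 - b2 * x)) *
        qRatio q a1 a2 b1 b2 (q * x) := by
    unfold qRatio
    rw [tprod_one_sub_mul_pow_mul hq a1, tprod_one_sub_mul_pow_mul hq a2,
      tprod_one_sub_mul_pow_mul hq b1, tprod_one_sub_mul_pow_mul hq b2, mul_mul_mul_comm,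
      mul_mul_mul_comm (1 - b1 * x), mul_div_mul_comm]
  rw [hsplit]
  calc _ = (1 - b1 * x) * (1 - b2 * x) / ((1 - b1 * x) * (1 - b2 * x)) *
        ((1 - a1 * x) * ((1 - a2 * x) * qRatio q a1 a2 b1 b2 (q * x))) := by ring
    _ = _ := by rw [div_self (mul_ne_zero h1 h2), one_mul]

noncomputable def qBinomialSeries (q a b : ℂ) : ℂ⟦X⟧ := mk (qBinomialCoeff q a b)

def SolvesQDifference (q a1 a2 b1 b2 : ℂ) (P : ℂ⟦X⟧) : Prop :=
  (1 - C b1 * X) * (1 - C b2 * X) * P = (1 - C a1 * X) * (1 - C a2 * X) * rescale q P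

theorem constantCoeff_qBinomialSeries (q a b : ℂ) :
    constantCoeff (qBinomialSeries q a b) = 1 := by
  simp [qBinomialSeries, qBinomialCoeff, qPochhammer_zero]

theorem one_sub_C_mul_X_mul_qBinomialSeries (hq : ‖q‖ < 1) {a b : ℂ} (hb : b ≠ 0) :
    (1 - C b * X) * qBinomialSeries q a b = (1 - C a * X) * rescale q (qBinomialSeries q a b) := by
  ext (_ | n)
  · simp [constantCoeff_rescale]
  · simp only [qBinomialSeries, sub_mul, one_mul, mul_assoc, map_sub, coeff_C_mul,
      coeff_succ_X_mul, coeff_rescale, coeff_mk]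
    linear_combination qBinomialCoeff_succ hq (a := a) hb n

theorem solvesQDifference_qBinomialSeries_mul (hq : ‖q‖ < 1) {a1 a2 b1 b2 : ℂ} (hb1 : b1 ≠ 0)
    (hb2 : b2 ≠ 0) :
    SolvesQDifference q a1 a2 b1 b2 (qBinomialSeries q a1 b1 * qBinomialSeries q a2 b2) := by
  have h1 := one_sub_C_mul_X_mul_qBinomialSeries hq (a := a1) hb1
  have h2 := one_sub_C_mul_X_mul_qBinomialSeries hq (a := a2) hb2
  rw [SolvesQDifference, map_mul]
  linear_combination ((1 - C b2 * X) * qBinomialSeries q a2 b2) * h1 +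
    ((1 - C a1 * X) * rescale q (qBinomialSeries q a1 b1)) * h2

theorem HasSumOnBall.solvesQDifference {P : ℂ⟦X⟧} {r : ℝ} {a1 a2 b1 b2 : ℂ} (hq : ‖q‖ < 1)
    (h : HasSumOnBall P (qRatio q a1 a2 b1 b2) r) (hr : 0 < r) (hr1 : r ≤ 1 / ‖b1‖)
    (hr2 : r ≤ 1 / ‖b2‖) : SolvesQDifference q a1 a2 b1 b2 P := by
  rw [SolvesQDifference, ← sub_eq_zero, mul_assoc, mul_assoc]
  refine (((h.one_sub_C_mul_X_mul b2).one_sub_C_mul_X_mul b1).sub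
    (((h.rescale hq.le).one_sub_C_mul_X_mul a2).one_sub_C_mul_X_mul a1)).eq_zero hr fun x hx => ?_
  exact sub_eq_zero.mpr (mul_qRatio_eq hq (one_sub_mul_ne_zero_of_norm_lt (hx.trans_le hr1))
    (one_sub_mul_ne_zero_of_norm_lt (hx.trans_le hr2)))

theorem SolvesQDifference.eq (hq : ‖q‖ < 1) {a1 a2 b1 b2 : ℂ} {P Q : ℂ⟦X⟧}
    (hP : SolvesQDifference q a1 a2 b1 b2 P) (hQ : SolvesQDifference q a1 a2 b1 b2 Q)
    (h0 : constantCoeff P = constantCoeff Q) : P = Q := by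
  rw [← sub_eq_zero]
  refine eq_zero_of_mul_eq_mul_rescale (fun n hn => pow_ne_one_of_norm_lt_one hq hn)
    (u := (1 - C b1 * X) * (1 - C b2 * X)) (v := (1 - C a1 * X) * (1 - C a2 * X)) (by simp)
    (by simp) ?_ (by rw [map_sub, h0, sub_self])
  rw [SolvesQDifference] at hP hQ
  rw [map_sub]
  linear_combination hP - hQ

end QDifference

/-- the Taylor coefficients of `(a_1 x, a_2 x;q)_∞/(b_1 x, b_2 x;q)_∞` are given by
a terminating `₂φ₁` expression (little q-Jacobi polynomials). -/
theorem coeff_D5_generating_function_eq_2phi1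
    (q : ℂ) (hq0 : 0 < ‖q‖) (hq1 : ‖q‖ < 1)
    (a1 a2 b1 b2 : ℂ) (hb1 : b1 ≠ 0) (hb2 : b2 ≠ 0) (ha2 : a2 ≠ 0)
    (k : ℕ)
    (poch : ℂ → ℕ → ℂ)
    (hpoch : ∀ (c : ℂ) (j : ℕ), poch c j = ∏ i ∈ Finset.range j, (1 - c * q ^ i))
    (hne : ∀ s ≤ k, poch (b2 * q ^ (1 - (k : ℤ)) / a2) s ≠ 0)
    (p : ℕ → ℂ)
    (hp : ∀ x : ℂ, ‖x‖ < min (1 / ‖b1‖) (1 / ‖b2‖) →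
      HasSum (fun j : ℕ => p j * x ^ j)
        (((∏' n : ℕ, (1 - a1 * q ^ n * x)) * (∏' n : ℕ, (1 - a2 * q ^ n * x))) /
          ((∏' n : ℕ, (1 - b1 * q ^ n * x)) * (∏' n : ℕ, (1 - b2 * q ^ n * x))))) :
    p k = b2 ^ k * poch (a2 / b2) k / poch q k *
      ∑ s ∈ Finset.range (k + 1),
        poch (q ^ (-(k : ℤ))) s * poch (a1 / b1) s /
            (poch (b2 * q ^ (1 - (k : ℤ)) / a2) s * poch q s) *
          (q * b1 / a2) ^ s := by
  obtain rfl : poch = qPochhammer q := funext₂ hpoch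
  have hr : 0 < min (1 / ‖b1‖) (1 / ‖b2‖) :=
    lt_min (one_div_pos.mpr (norm_pos_iff.mpr hb1)) (one_div_pos.mpr (norm_pos_iff.mpr hb2))
  have hP : HasSumOnBall (mk p) (qRatio q a1 a2 b1 b2) (min (1 / ‖b1‖) (1 / ‖b2‖)) :=
    fun x hx => by simpa only [coeff_mk, qRatio] using hp x hx
  have hpS : mk p = qBinomialSeries q a1 b1 * qBinomialSeries q a2 b2 := by
    refine (hP.solvesQDifference hq1 hr (min_le_left _ _) (min_le_right _ _)).eq hq1
      (solvesQDifference_qBinomialSeries_mul hq1 hb1 hb2) ?_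
    rw [hP.constantCoeff_eq hr, qRatio_zero, map_mul, constantCoeff_qBinomialSeries,
      constantCoeff_qBinomialSeries, mul_one]
  rw [← coeff_mk k p, hpS, coeff_mul, Nat.sum_antidiagonal_eq_sum_range_succ_mk, mul_sum]
  refine sum_congr rfl fun s hs => ?_
  have hsk : s ≤ k := Nat.lt_succ_iff.mp (mem_range.mp hs)
  rw [qBinomialSeries, qBinomialSeries, coeff_mk, coeff_mk]
  exact (two_phi_one_term_eq_qBinomialCoeff_mul (norm_pos_iff.mp hq0) hq1 ha2 hb2 hsk
    (hne s hsk)).symm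
end

section
/- (Casorati determinant D_3, type q-E_6^{(1)}.) Suppose Y, Ȳ ∈ ℂ[[X]] satisfy both (1−a_1X)(1−a_2X)(1−a_3X)·Y(qX) = (1−b_1X)(1−b_2X)(1−b_3X)·Y and (1−a_1X)·Ȳ = (1−b_1X)·Y, let (P, Q) be a Padé pair for Y and (P̄, Q̄) a Padé pair for Ȳ. Then there exists a polynomial R ∈ ℂ[X] with deg R ≤ 1 such that (1−a_2X)(1−a_3X)·P(qX)·Q̄(X) − (1−b_2X)(1−b_3X)·P̄(X)·Q(qX) = X^{m+n+1}·R. -/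
open Polynomial

/-!
Cancelling the unit `1 - a₁X` from the two functional equations gives the contiguity relation
`(1 - a₂X)(1 - a₃X) Y(qX) = (1 - b₂X)(1 - b₃X) Ȳ`. Since `P(qX) ≡ Y(qX) Q(qX)` and `P̄ ≡ Ȳ Q̄`
modulo `X^{m+n+1}`, the contiguity relation makes the Casorati combination vanish modulo
`X^{m+n+1}`. It is a polynomial of degree at most `m + n + 2`, so the cofactor of `X^{m+n+1}`
has degree at most one.
-/

theorem dvd_casorati {R : Type*} [CommRing R] {z y ybar A B P Q Pbar Qbar : R}
    (hPade : z ∣ y * Q - P) (hPadebar : z ∣ ybar * Qbar - Pbar) (hy : A * y = B * ybar) :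
    z ∣ A * P * Qbar - B * Pbar * Q := by
  have hsplit : A * P * Qbar - B * Pbar * Q =
      B * Q * (ybar * Qbar - Pbar) - A * Qbar * (y * Q - P) := by
    linear_combination Q * Qbar * hy
  rw [hsplit]
  exact (hPadebar.mul_left _).sub (hPade.mul_left _)

namespace PowerSeries

variable {R : Type*} [CommRing R]

theorem isUnit_one_sub_C_mul_X (a : R) : IsUnit (1 - C a * X : R⟦X⟧) := by
  simp [isUnit_iff_constantCoeff]

theorem X_pow_dvd_rescale {N : ℕ} {f : R⟦X⟧} (q : R) (h : X ^ N ∣ f) :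
    X ^ N ∣ rescale q f := by
  rw [X_pow_dvd_iff] at h ⊢
  intro d hd
  rw [coeff_rescale, h d hd, mul_zero]

end PowerSeries

namespace Polynomial

variable {R : Type*} [CommRing R]

theorem coe_comp_C_mul_X (q : R) (p : R[X]) :
    ((p.comp (C q * X) : R[X]) : PowerSeries R) = PowerSeries.rescale q (p : PowerSeries R) := by
  ext n
  rw [coeff_coe, comp_C_mul_X_coeff, PowerSeries.coeff_rescale, coeff_coe, mul_comm]

theorem natDegree_comp_C_mul_X_le (q : R) (p : R[X]) :
    (p.comp (C q * X)).natDegree ≤ p.natDegree :=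
  natDegree_le_iff_coeff_eq_zero.mpr fun k hk => by
    rw [comp_C_mul_X_coeff, coeff_eq_zero_of_natDegree_lt hk, zero_mul]

theorem natDegree_one_sub_C_mul_X_le (a : R) : (1 - C a * X).natDegree ≤ 1 :=
  (natDegree_sub_le _ _).trans (max_le (by simp) ((natDegree_C_mul_le a X).trans natDegree_X_le))

theorem natDegree_quadratic_mul_mul_le {a b : R} {p r : R[X]} {m n : ℕ}
    (hp : p.natDegree ≤ m) (hr : r.natDegree ≤ n) :
    ((1 - C a * X) * (1 - C b * X) * p * r).natDegree ≤ m + n + 2 := by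
  have hab := natDegree_mul_le_of_le (natDegree_one_sub_C_mul_X_le a)
    (natDegree_one_sub_C_mul_X_le b)
  have := natDegree_mul_le_of_le (natDegree_mul_le_of_le hab hp) hr
  omega

theorem X_pow_dvd_coe_iff {N : ℕ} {p : R[X]} :
    (PowerSeries.X : PowerSeries R) ^ N ∣ (p : PowerSeries R) ↔ X ^ N ∣ p := by
  simp only [PowerSeries.X_pow_dvd_iff, X_pow_dvd_iff, coeff_coe]

theorem exists_degree_le_of_X_pow_dvd_coe [Nontrivial R] {N k : ℕ} {p : R[X]}
    (hdvd : (PowerSeries.X : PowerSeries R) ^ N ∣ (p : PowerSeries R))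
    (hdeg : p.natDegree ≤ N + k) : ∃ r : R[X], r.degree ≤ k ∧ p = X ^ N * r := by
  obtain ⟨r, rfl⟩ := X_pow_dvd_coe_iff.mp hdvd
  refine ⟨r, ?_, rfl⟩
  rcases eq_or_ne r 0 with rfl | hr
  · simp
  rw [natDegree_X_pow_mul N hr] at hdeg
  exact natDegree_le_iff_degree_le.mp (by omega)

end Polynomial

/-- Casorati determinant `D_3` for type q-E_6^{(1)}. -/
theorem casorati_D3_qE6
    (q a1 a2 a3 b1 b2 b3 : ℂ) (m n : ℕ)
    (Y Ybar : PowerSeries ℂ)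
    (hY : (1 - PowerSeries.C a1 * PowerSeries.X) * (1 - PowerSeries.C a2 * PowerSeries.X) *
        (1 - PowerSeries.C a3 * PowerSeries.X) * PowerSeries.rescale q Y =
      (1 - PowerSeries.C b1 * PowerSeries.X) * (1 - PowerSeries.C b2 * PowerSeries.X) *
        (1 - PowerSeries.C b3 * PowerSeries.X) * Y)
    (hYY : (1 - PowerSeries.C a1 * PowerSeries.X) * Ybar =
      (1 - PowerSeries.C b1 * PowerSeries.X) * Y)
    (P Q : Polynomial ℂ) (hdP : P.degree ≤ m) (hdQ : Q.degree ≤ n)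
    (hPade : (PowerSeries.X : PowerSeries ℂ) ^ (m + n + 1) ∣
      Y * (Q : PowerSeries ℂ) - (P : PowerSeries ℂ))
    (Pbar Qbar : Polynomial ℂ) (hdPbar : Pbar.degree ≤ m) (hdQbar : Qbar.degree ≤ n)
    (hPadebar : (PowerSeries.X : PowerSeries ℂ) ^ (m + n + 1) ∣
      Ybar * (Qbar : PowerSeries ℂ) - (Pbar : PowerSeries ℂ)) :
    ∃ R : Polynomial ℂ, R.degree ≤ 1 ∧
      (1 - C a2 * X) * (1 - C a3 * X) * (P.comp (C q * X)) * Qbar -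
          (1 - C b2 * X) * (1 - C b3 * X) * Pbar * (Q.comp (C q * X)) =
        X ^ (m + n + 1) * R := by
  have hcontiguity : (1 - PowerSeries.C a2 * PowerSeries.X) *
      (1 - PowerSeries.C a3 * PowerSeries.X) * PowerSeries.rescale q Y =
      (1 - PowerSeries.C b2 * PowerSeries.X) * (1 - PowerSeries.C b3 * PowerSeries.X) * Ybar := by
    refine (PowerSeries.isUnit_one_sub_C_mul_X a1).mul_left_cancel ?_
    linear_combination hY - (1 - PowerSeries.C b2 * PowerSeries.X) *
      (1 - PowerSeries.C b3 * PowerSeries.X) * hYY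
  have hPadeq := PowerSeries.X_pow_dvd_rescale q hPade
  rw [map_sub, map_mul] at hPadeq
  refine exists_degree_le_of_X_pow_dvd_coe ?_ ((natDegree_sub_le _ _).trans (max_le ?_ ?_))
  · simpa only [coe_sub, coe_mul, coe_one, coe_X, coe_C, coe_comp_C_mul_X] using
      dvd_casorati hPadeq hPadebar hcontiguity
  · exact natDegree_quadratic_mul_mul_le
      ((natDegree_comp_C_mul_X_le q P).trans (natDegree_le_of_degree_le hdP))
      (natDegree_le_of_degree_le hdQbar)
  · exact natDegree_quadratic_mul_mul_le (natDegree_le_of_degree_le hdPbar)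
      ((natDegree_comp_C_mul_X_le q Q).trans (natDegree_le_of_degree_le hdQ))
end
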